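/- Work in dimension 4 with Minkowski metric η = diag(1,−1,−1,−1) and the κ-Minkowski structure constants f^{ab}_c = λ(δ^a_0 δ^b_c − δ^b_0 δ^a_c), λ ∈ ℝ. Let γ, ρ : ℝ⁴ → Mat_4(ℝ) be smooth, A : ℝ⁴ → ℝ⁴ smooth, and F : ℝ⁴ → Mat_4(ℝ) smooth with F_{ab} = −F_{ba}. Assume the deformed Bianchi identity (D_a F_{bc})(x) − Σ_{d,e} F_{ad}(x) f^{de}_b F_{ec}(x) + cyclic permutations of (a,b,c) = 0, and assume that for every smooth ψ : ℝ⁴ → ℝ: (D_a D_b ψ) − (D_b D_a ψ) = {F_{ab}, ψ} + Σ_{d,e} F_{ad} f^{de}_b (D_e ψ) − Σ_{d,e} F_{bd} f^{de}_a (D_e ψ). Then for every α ∈ ℝ, the generalized expression E_G^a := E_C^a + α (Σ_{b,e,d} f^{ba}_b F_{ed} F^{ed} + 4 Σ_{b,e,d} f^{be}_b F_{ed} F^{da}) satisfies the generalized Noether identity Σ_a (D_a E_G^a)(x) = (1/2)(1 + 12α) Σ_{c,a,b} f^{ab}_c F_{ab}(x) E_G^c(x) for every x. -/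

import Mathlib

set_option autoImplicit false

open scoped BigOperators

/-- Partial derivative `∂_a u (x)` of `u : ℝ⁴ → ℝ`. -/
noncomputable def pd (a : Fin 4) (u : (Fin 4 → ℝ) → ℝ) (x : Fin 4 → ℝ) : ℝ :=
  fderiv ℝ u x (Pi.single a 1)

/-- Lie-Poisson bracket `{u,v}(x) = Σ_{a,b,c} f^{ab}_c x^c ∂_a u ∂_b v`. -/
noncomputable def pb (f : Fin 4 → Fin 4 → Fin 4 → ℝ)
    (u v : (Fin 4 → ℝ) → ℝ) (x : Fin 4 → ℝ) : ℝ :=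
  ∑ a, ∑ b, ∑ c, f a b c * x c * pd a u x * pd b v x

/-- Covariant derivative `(D_a ψ)(x) = Σ_m ρ^m_a(A(x)) (Σ_l γ^l_m(A(x)) ∂_l ψ(x) + {A_m, ψ}(x))`. -/
noncomputable def Dcov (f : Fin 4 → Fin 4 → Fin 4 → ℝ)
    (γ ρ : (Fin 4 → ℝ) → Matrix (Fin 4) (Fin 4) ℝ)
    (A : (Fin 4 → ℝ) → Fin 4 → ℝ) (a : Fin 4)
    (ψ : (Fin 4 → ℝ) → ℝ) (x : Fin 4 → ℝ) : ℝ :=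
  ∑ m, ρ (A x) m a * ((∑ l, γ (A x) l m * pd l ψ x) + pb f (fun y => A y m) ψ x)

/-- The Minkowski metric `η = diag(1,−1,−1,−1)`. -/
noncomputable def ηm : Matrix (Fin 4) (Fin 4) ℝ := Matrix.diagonal ![1, -1, -1, -1]

/-- Indices raised with `η`: `F^{ab}(x) = Σ_{c,e} η^{ac} η^{be} F_{ce}(x)`. -/
noncomputable def Fup (F : (Fin 4 → ℝ) → Matrix (Fin 4) (Fin 4) ℝ)
    (a b : Fin 4) (x : Fin 4 → ℝ) : ℝ :=
  ∑ c, ∑ e, ηm a c * ηm b e * F x c e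

/-- The covariant equations-of-motion expression `E_C^a(x)`. -/
noncomputable def EC (f : Fin 4 → Fin 4 → Fin 4 → ℝ)
    (γ ρ : (Fin 4 → ℝ) → Matrix (Fin 4) (Fin 4) ℝ)
    (A : (Fin 4 → ℝ) → Fin 4 → ℝ)
    (F : (Fin 4 → ℝ) → Matrix (Fin 4) (Fin 4) ℝ)
    (a : Fin 4) (x : Fin 4 → ℝ) : ℝ :=
  (∑ c, Dcov f γ ρ A c (fun y => Fup F c a y) x)
  + (1/2) * (∑ d, ∑ e, ∑ b, F x d e * f d e b * Fup F a b x)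
  - ∑ d, ∑ e, ∑ b, F x d e * f a e b * Fup F d b x

/-- κ-Minkowski structure constants `f^{ab}_c = λ(δ^a_0 δ^b_c − δ^b_0 δ^a_c)`. -/
def fκ (lam : ℝ) (a b c : Fin 4) : ℝ :=
  lam * ((if a = 0 then 1 else 0) * (if b = c then 1 else 0)
       - (if b = 0 then 1 else 0) * (if a = c then 1 else 0))

/-- The generalized equations-of-motion expression `E_G^a(x)` with parameter `α`. -/
noncomputable def EG (α : ℝ) (f : Fin 4 → Fin 4 → Fin 4 → ℝ)
    (γ ρ : (Fin 4 → ℝ) → Matrix (Fin 4) (Fin 4) ℝ)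
    (A : (Fin 4 → ℝ) → Fin 4 → ℝ)
    (F : (Fin 4 → ℝ) → Matrix (Fin 4) (Fin 4) ℝ)
    (a : Fin 4) (x : Fin 4 → ℝ) : ℝ :=
  EC f γ ρ A F a x
    + α * ((∑ b, ∑ e, ∑ d, f b a b * F x e d * Fup F e d x)
         + 4 * ∑ b, ∑ e, ∑ d, f b e b * F x e d * Fup F d a x)

/-! ### Auxiliary calculus lemmas -/

lemma pd_neg (a : Fin 4) (u : (Fin 4 → ℝ) → ℝ) (x : Fin 4 → ℝ) :
    pd a (fun y => -u y) x = -pd a u x := by simp [pd, fderiv_neg]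

lemma pd_add {u v : (Fin 4 → ℝ) → ℝ} {x : Fin 4 → ℝ} (hu : DifferentiableAt ℝ u x)
    (hv : DifferentiableAt ℝ v x) (a : Fin 4) :
    pd a (fun y => u y + v y) x = pd a u x + pd a v x := by simp [pd, fderiv_fun_add hu hv]

lemma pd_sub {u v : (Fin 4 → ℝ) → ℝ} {x : Fin 4 → ℝ} (hu : DifferentiableAt ℝ u x)
    (hv : DifferentiableAt ℝ v x) (a : Fin 4) :
    pd a (fun y => u y - v y) x = pd a u x - pd a v x := by simp [pd, fderiv_fun_sub hu hv]

lemma pd_const_mul {u : (Fin 4 → ℝ) → ℝ} {x : Fin 4 → ℝ} (hu : DifferentiableAt ℝ u x)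
    (c : ℝ) (a : Fin 4) : pd a (fun y => c * u y) x = c * pd a u x := by
  simp [pd, fderiv_const_mul hu c]

lemma pd_mul {u v : (Fin 4 → ℝ) → ℝ} {x : Fin 4 → ℝ} (hu : DifferentiableAt ℝ u x)
    (hv : DifferentiableAt ℝ v x) (a : Fin 4) :
    pd a (fun y => u y * v y) x = pd a u x * v x + u x * pd a v x := by
  simp [pd, fderiv_fun_mul hu hv]; ring

lemma pd_sum {ι : Type*} (s : Finset ι) (u : ι → (Fin 4 → ℝ) → ℝ) {x : Fin 4 → ℝ}
    (h : ∀ i ∈ s, DifferentiableAt ℝ (u i) x) (a : Fin 4) :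
    pd a (fun y => ∑ i ∈ s, u i y) x = ∑ i ∈ s, pd a (u i) x := by
  simp [pd, fderiv_fun_sum h]

lemma pd_contDiff {ψ : (Fin 4 → ℝ) → ℝ} (hψ : ContDiff ℝ (⊤ : ℕ∞) ψ) (a : Fin 4) :
    ContDiff ℝ (⊤ : ℕ∞) (fun x => pd a ψ x) :=
  (hψ.fderiv_right (by simp)).clm_apply contDiff_const

/-- First-order coefficients of the covariant derivative. -/
noncomputable def Cc (f : Fin 4 → Fin 4 → Fin 4 → ℝ)
    (γ ρ : (Fin 4 → ℝ) → Matrix (Fin 4) (Fin 4) ℝ)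
    (A : (Fin 4 → ℝ) → Fin 4 → ℝ) (a l : Fin 4) (x : Fin 4 → ℝ) : ℝ :=
  ∑ m, ρ (A x) m a * (γ (A x) l m + ∑ p, ∑ c, f p l c * x c * pd p (fun y => A y m) x)

lemma Dcov_eq_sum (f : Fin 4 → Fin 4 → Fin 4 → ℝ)
    (γ ρ : (Fin 4 → ℝ) → Matrix (Fin 4) (Fin 4) ℝ)
    (A : (Fin 4 → ℝ) → Fin 4 → ℝ) (a : Fin 4)
    (ψ : (Fin 4 → ℝ) → ℝ) (x : Fin 4 → ℝ) :
    Dcov f γ ρ A a ψ x = ∑ l, Cc f γ ρ A a l x * pd l ψ x := by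
  simp only [Dcov, pb, Cc, Fin.sum_univ_four]; ring

section DL
variable (f : Fin 4 → Fin 4 → Fin 4 → ℝ)
    (γ ρ : (Fin 4 → ℝ) → Matrix (Fin 4) (Fin 4) ℝ)
    (A : (Fin 4 → ℝ) → Fin 4 → ℝ)

lemma Dcov_neg (a : Fin 4) (u : (Fin 4 → ℝ) → ℝ) (x : Fin 4 → ℝ) :
    Dcov f γ ρ A a (fun y => -u y) x = -Dcov f γ ρ A a u x := by
  simp only [Dcov_eq_sum, pd_neg, mul_neg, Finset.sum_neg_distrib]

lemma Dcov_add {u v : (Fin 4 → ℝ) → ℝ} {x : Fin 4 → ℝ} (hu : DifferentiableAt ℝ u x)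
    (hv : DifferentiableAt ℝ v x) (a : Fin 4) :
    Dcov f γ ρ A a (fun y => u y + v y) x = Dcov f γ ρ A a u x + Dcov f γ ρ A a v x := by
  simp only [Dcov_eq_sum, pd_add hu hv, Fin.sum_univ_four]; ring

lemma Dcov_sub {u v : (Fin 4 → ℝ) → ℝ} {x : Fin 4 → ℝ} (hu : DifferentiableAt ℝ u x)
    (hv : DifferentiableAt ℝ v x) (a : Fin 4) :
    Dcov f γ ρ A a (fun y => u y - v y) x = Dcov f γ ρ A a u x - Dcov f γ ρ A a v x := by
  simp only [Dcov_eq_sum, pd_sub hu hv, Fin.sum_univ_four]; ring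

lemma Dcov_const_mul {u : (Fin 4 → ℝ) → ℝ} {x : Fin 4 → ℝ} (hu : DifferentiableAt ℝ u x)
    (c : ℝ) (a : Fin 4) :
    Dcov f γ ρ A a (fun y => c * u y) x = c * Dcov f γ ρ A a u x := by
  simp only [Dcov_eq_sum, pd_const_mul hu, Fin.sum_univ_four]; ring

lemma Dcov_mul {u v : (Fin 4 → ℝ) → ℝ} {x : Fin 4 → ℝ} (hu : DifferentiableAt ℝ u x)
    (hv : DifferentiableAt ℝ v x) (a : Fin 4) :
    Dcov f γ ρ A a (fun y => u y * v y) x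
      = Dcov f γ ρ A a u x * v x + u x * Dcov f γ ρ A a v x := by
  simp only [Dcov_eq_sum, pd_mul hu hv, Fin.sum_univ_four]; ring

lemma Dcov_sum {ι : Type*} (s : Finset ι) (u : ι → (Fin 4 → ℝ) → ℝ) {x : Fin 4 → ℝ}
    (h : ∀ i ∈ s, DifferentiableAt ℝ (u i) x) (a : Fin 4) :
    Dcov f γ ρ A a (fun y => ∑ i ∈ s, u i y) x = ∑ i ∈ s, Dcov f γ ρ A a (u i) x := by
  simp only [Dcov_eq_sum, pd_sum s u h, Finset.mul_sum]
  exact Finset.sum_comm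

lemma Dcov_contDiff (hγ : ∀ i j, ContDiff ℝ (⊤ : ℕ∞) (fun B => γ B i j))
    (hρ : ∀ i j, ContDiff ℝ (⊤ : ℕ∞) (fun B => ρ B i j))
    (hA : ContDiff ℝ (⊤ : ℕ∞) A) {ψ : (Fin 4 → ℝ) → ℝ} (hψ : ContDiff ℝ (⊤ : ℕ∞) ψ) (a : Fin 4) :
    ContDiff ℝ (⊤ : ℕ∞) (fun x => Dcov f γ ρ A a ψ x) := by
  unfold Dcov pb
  apply ContDiff.sum; intro m _
  apply ContDiff.mul ((hρ m a).comp hA)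
  apply ContDiff.add
  · apply ContDiff.sum; intro l _
    exact ContDiff.mul ((hγ l m).comp hA) (pd_contDiff hψ l)
  · apply ContDiff.sum; intro p _
    apply ContDiff.sum; intro b _
    apply ContDiff.sum; intro c _
    apply ContDiff.mul
    apply ContDiff.mul
    · exact (contDiff_const).mul ((ContinuousLinearMap.proj c : (Fin 4 → ℝ) →L[ℝ] ℝ).contDiff)
    · exact pd_contDiff (contDiff_pi.mp hA m) p
    · exact pd_contDiff hψ b
end DL

lemma pb_swap (lam : ℝ) (u v : (Fin 4 → ℝ) → ℝ) (x : Fin 4 → ℝ) :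
    pb (fκ lam) u v x = -pb (fκ lam) v u x := by
  simp [pb, Fin.sum_univ_four, fκ]
  ring

lemma pb_self (lam : ℝ) (u : (Fin 4 → ℝ) → ℝ) (x : Fin 4 → ℝ) :
    pb (fκ lam) u u x = 0 := by
  have h := pb_swap lam u u x; linarith

lemma pb_neg_right (f : Fin 4 → Fin 4 → Fin 4 → ℝ) (u v : (Fin 4 → ℝ) → ℝ) (x : Fin 4 → ℝ) :
    pb f u (fun y => -v y) x = -pb f u v x := by
  simp only [pb, Fin.sum_univ_four, pd_neg]; ring

lemma etam00 : ηm 0 0 = 1 := by simp [ηm]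
lemma etam11 : ηm 1 1 = -1 := by simp [ηm]
lemma etam22 : ηm 2 2 = -1 := by simp [ηm]
lemma etam33 : ηm 3 3 = -1 := by simp [ηm]

lemma Fup_eq (F : (Fin 4 → ℝ) → Matrix (Fin 4) (Fin 4) ℝ) (a b : Fin 4) (x : Fin 4 → ℝ) :
    Fup F a b x = ηm a a * ηm b b * F x a b := by
  fin_cases a <;> fin_cases b <;>
    simp [Fup, ηm, Fin.sum_univ_four, Matrix.diagonal]


lemma Dcov_zero (f : Fin 4 → Fin 4 → Fin 4 → ℝ)
    (γ ρ : (Fin 4 → ℝ) → Matrix (Fin 4) (Fin 4) ℝ)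
    (A : (Fin 4 → ℝ) → Fin 4 → ℝ) (a : Fin 4) (x : Fin 4 → ℝ) :
    Dcov f γ ρ A a (fun _ => (0:ℝ)) x = 0 := by
  simp [Dcov_eq_sum, pd]

set_option maxHeartbeats 4000000 in
set_option maxRecDepth 16000 in
theorem stmt8 (lam : ℝ)
    (γ ρ : (Fin 4 → ℝ) → Matrix (Fin 4) (Fin 4) ℝ)
    (hγ : ∀ i j, ContDiff ℝ (⊤ : ℕ∞) (fun B => γ B i j))
    (hρ : ∀ i j, ContDiff ℝ (⊤ : ℕ∞) (fun B => ρ B i j))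
    (A : (Fin 4 → ℝ) → Fin 4 → ℝ) (hA : ContDiff ℝ (⊤ : ℕ∞) A)
    (F : (Fin 4 → ℝ) → Matrix (Fin 4) (Fin 4) ℝ)
    (hFsm : ∀ a b, ContDiff ℝ (⊤ : ℕ∞) (fun x => F x a b))
    (hFas : ∀ (x : Fin 4 → ℝ) (a b : Fin 4), F x a b = - F x b a)
    (hBianchi : ∀ (x : Fin 4 → ℝ) (a b c : Fin 4),
      (Dcov (fκ lam) γ ρ A a (fun y => F y b c) x
          - ∑ d, ∑ e, F x a d * fκ lam d e b * F x e c)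
      + (Dcov (fκ lam) γ ρ A b (fun y => F y c a) x
          - ∑ d, ∑ e, F x b d * fκ lam d e c * F x e a)
      + (Dcov (fκ lam) γ ρ A c (fun y => F y a b) x
          - ∑ d, ∑ e, F x c d * fκ lam d e a * F x e b) = 0)
    (hComm : ∀ ψ : (Fin 4 → ℝ) → ℝ, ContDiff ℝ (⊤ : ℕ∞) ψ →
      ∀ (a b : Fin 4) (x : Fin 4 → ℝ),
        Dcov (fκ lam) γ ρ A a (fun y => Dcov (fκ lam) γ ρ A b ψ y) x
          - Dcov (fκ lam) γ ρ A b (fun y => Dcov (fκ lam) γ ρ A a ψ y) x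
        = pb (fκ lam) (fun y => F y a b) ψ x
          + (∑ d, ∑ e, F x a d * fκ lam d e b * Dcov (fκ lam) γ ρ A e ψ x)
          - ∑ d, ∑ e, F x b d * fκ lam d e a * Dcov (fκ lam) γ ρ A e ψ x) :
    ∀ (α : ℝ) (x : Fin 4 → ℝ),
      ∑ a, Dcov (fκ lam) γ ρ A a (fun y => EG α (fκ lam) γ ρ A F a y) x
        = (1/2) * (1 + 12 * α) *
            ∑ c, ∑ a, ∑ b, fκ lam a b c * F x a b * EG α (fκ lam) γ ρ A F c x := by
  intro α x
  have hFd : ∀ a b : Fin 4, Differentiable ℝ (fun y => F y a b) :=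
    fun a b => (hFsm a b).differentiable (by simp)
  have hDsm : ∀ c p q : Fin 4, ContDiff ℝ (⊤ : ℕ∞) (fun y => Dcov (fκ lam) γ ρ A c (fun z => F z p q) y) :=
    fun c p q => Dcov_contDiff (fκ lam) γ ρ A hγ hρ hA (hFsm p q) c
  have hInPt : ∀ (c a : Fin 4) (y : Fin 4 → ℝ),
      Dcov (fκ lam) γ ρ A c (fun z => Fup F c a z) y = ηm c c * ηm a a * Dcov (fκ lam) γ ρ A c (fun z => F z c a) y := by
    intro c a y
    have h1 : (fun z => Fup F c a z) = (fun z => ηm c c * ηm a a * F z c a) :=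
      funext fun z => Fup_eq F c a z
    rw [h1, Dcov_const_mul (fκ lam) γ ρ A ((hFd c a) y) (ηm c c * ηm a a) c]
  have hFdiag : ∀ (z : Fin 4 → ℝ) (i : Fin 4), F z i i = 0 := by
    intro z i; have := hFas z i i; linarith
  have hGdiag : ∀ e i : Fin 4, Dcov (fκ lam) γ ρ A e (fun y => F y i i) x = 0 := by
    intro e i
    rw [show (fun y => F y i i) = (fun _ : Fin 4 → ℝ => (0:ℝ)) from funext fun z => hFdiag z i]
    exact Dcov_zero (fκ lam) γ ρ A e x
  have hGswap : ∀ e p q : Fin 4, Dcov (fκ lam) γ ρ A e (fun y => F y p q) x = -Dcov (fκ lam) γ ρ A e (fun y => F y q p) x := by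
    intro e p q
    rw [show (fun y => F y p q) = (fun y => -F y q p) from funext fun z => hFas z p q]
    exact Dcov_neg (fκ lam) γ ρ A e (fun y => F y q p) x
  -- Leibniz expansion of each summand of the LHS
  have hsummand : ∀ a : Fin 4,
      Dcov (fκ lam) γ ρ A a (fun y => EG α (fκ lam) γ ρ A F a y) x = (∑ c, ηm c c * ηm a a * Dcov (fκ lam) γ ρ A a (fun y => Dcov (fκ lam) γ ρ A c (fun z => F z c a) y) x) + (1/2 * (∑ d, ∑ e, ∑ b, fκ lam d e b * (ηm a a * ηm b b) * (Dcov (fκ lam) γ ρ A a (fun y => F y d e) x * F x a b + F x d e * Dcov (fκ lam) γ ρ A a (fun y => F y a b) x)) - (∑ d, ∑ e, ∑ b, fκ lam a e b * (ηm d d * ηm b b) * (Dcov (fκ lam) γ ρ A a (fun y => F y d e) x * F x d b + F x d e * Dcov (fκ lam) γ ρ A a (fun y => F y d b) x)) + α * ((∑ b, ∑ e, ∑ d, fκ lam b a b * (ηm e e * ηm d d) * (Dcov (fκ lam) γ ρ A a (fun y => F y e d) x * F x e d + F x e d * Dcov (fκ lam) γ ρ A a (fun y => F y e d) x)) + 4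 * (∑ b, ∑ e, ∑ d, fκ lam b e b * (ηm d d * ηm a a) * (Dcov (fκ lam) γ ρ A a (fun y => F y e d) x * F x d a + F x e d * Dcov (fκ lam) γ ρ A a (fun y => F y d a) x)))) := by
    intro a
    have e1 : (fun y => EG α (fκ lam) γ ρ A F a y) = (fun y => ((∑ c, ηm c c * ηm a a * Dcov (fκ lam) γ ρ A c (fun z => F z c a) y) + 1/2 * (∑ d, ∑ e, ∑ b, fκ lam d e b * (ηm a a * ηm b b) * (F y d e * F y a b)) - (∑ d, ∑ e, ∑ b, fκ lam a e b * (ηm d d * ηm b b) * (F y d e * F y d b))) + α * ((∑ b, ∑ e, ∑ d, fκ lam b a b * (ηm e e * ηm d d) * (F y e d * F y e d)) + 4 * (∑ b, ∑ e, ∑ d, fκ lam b e b * (ηm d d * ηm a a) * (F y e d * F y d a)))) := by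
      funext y
      simp only [EG, EC]
      simp only [hInPt]
      simp only [Fup_eq]
      simp only [Fin.sum_univ_four]
      ring
    have c1 : ContDiff ℝ (⊤ : ℕ∞) (fun y => ∑ c, ηm c c * ηm a a * Dcov (fκ lam) γ ρ A c (fun z => F z c a) y) :=
      ContDiff.sum fun c _ => contDiff_const.mul (hDsm c c a)
    have c2 : ContDiff ℝ (⊤ : ℕ∞) (fun y => ∑ d, ∑ e, ∑ b, fκ lam d e b * (ηm a a * ηm b b) * (F y d e * F y a b)) :=
      ContDiff.sum fun d _ => ContDiff.sum fun e _ => ContDiff.sum fun b _ =>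
        contDiff_const.mul ((hFsm d e).mul (hFsm a b))
    have c3 : ContDiff ℝ (⊤ : ℕ∞) (fun y => ∑ d, ∑ e, ∑ b, fκ lam a e b * (ηm d d * ηm b b) * (F y d e * F y d b)) :=
      ContDiff.sum fun d _ => ContDiff.sum fun e _ => ContDiff.sum fun b _ =>
        contDiff_const.mul ((hFsm d e).mul (hFsm d b))
    have c4 : ContDiff ℝ (⊤ : ℕ∞) (fun y => ∑ b, ∑ e, ∑ d, fκ lam b a b * (ηm e e * ηm d d) * (F y e d * F y e d)) :=
      ContDiff.sum fun b _ => ContDiff.sum fun e _ => ContDiff.sum fun d _ =>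
        contDiff_const.mul ((hFsm e d).mul (hFsm e d))
    have c5 : ContDiff ℝ (⊤ : ℕ∞) (fun y => ∑ b, ∑ e, ∑ d, fκ lam b e b * (ηm d d * ηm a a) * (F y e d * F y d a)) :=
      ContDiff.sum fun b _ => ContDiff.sum fun e _ => ContDiff.sum fun d _ =>
        contDiff_const.mul ((hFsm e d).mul (hFsm d a))
    have dL : DifferentiableAt ℝ (fun y => (∑ c, ηm c c * ηm a a * Dcov (fκ lam) γ ρ A c (fun z => F z c a) y) + 1/2 * (∑ d, ∑ e, ∑ b, fκ lam d e b * (ηm a a * ηm b b) * (F y d e * F y a b)) - (∑ d, ∑ e, ∑ b, fκ lam a e b * (ηm d d * ηm b b) * (F y d e * F y d b))) x :=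
      (((c1.add (contDiff_const.mul c2)).sub c3).differentiable (by simp)) x
    have dR : DifferentiableAt ℝ (fun y => α * ((∑ b, ∑ e, ∑ d, fκ lam b a b * (ηm e e * ηm d d) * (F y e d * F y e d)) + 4 * (∑ b, ∑ e, ∑ d, fκ lam b e b * (ηm d d * ηm a a) * (F y e d * F y d a)))) x :=
      ((contDiff_const.mul ((c4.add (contDiff_const.mul c5)))).differentiable (by simp)) x
    have h1 : Dcov (fκ lam) γ ρ A a (fun y => ((∑ c, ηm c c * ηm a a * Dcov (fκ lam) γ ρ A c (fun z => F z c a) y) + 1/2 * (∑ d, ∑ e, ∑ b, fκ lam d e b * (ηm a a * ηm b b) * (F y d e * F y a b)) - (∑ d, ∑ e, ∑ b, fκ lam a e b * (ηm d d * ηm b b) * (F y d e * F y d b))) + α * ((∑ b, ∑ e, ∑ d, fκ lam b a b * (ηm e e * ηm d d) * (F y e d * F y e d)) + 4 * (∑ b, ∑ e, ∑ d, fκ lam b e b * (ηm d d * ηm a a) * (F y e d * F y d a)))) x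
        = Dcov (fκ lam) γ ρ A a (fun y => (∑ c, ηm c c * ηm a a * Dcov (fκ lam) γ ρ A c (fun z => F z c a) y) + 1/2 * (∑ d, ∑ e, ∑ b, fκ lam d e b * (ηm a a * ηm b b) * (F y d e * F y a b)) - (∑ d, ∑ e, ∑ b, fκ lam a e b * (ηm d d * ηm b b) * (F y d e * F y d b))) x
          + Dcov (fκ lam) γ ρ A a (fun y => α * ((∑ b, ∑ e, ∑ d, fκ lam b a b * (ηm e e * ηm d d) * (F y e d * F y e d)) + 4 * (∑ b, ∑ e, ∑ d, fκ lam b e b * (ηm d d * ηm a a) * (F y e d * F y d a)))) x :=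
      Dcov_add (fκ lam) γ ρ A dL dR a
    have h2 : Dcov (fκ lam) γ ρ A a (fun y => (∑ c, ηm c c * ηm a a * Dcov (fκ lam) γ ρ A c (fun z => F z c a) y) + 1/2 * (∑ d, ∑ e, ∑ b, fκ lam d e b * (ηm a a * ηm b b) * (F y d e * F y a b)) - (∑ d, ∑ e, ∑ b, fκ lam a e b * (ηm d d * ηm b b) * (F y d e * F y d b))) x
        = Dcov (fκ lam) γ ρ A a (fun y => (∑ c, ηm c c * ηm a a * Dcov (fκ lam) γ ρ A c (fun z => F z c a) y) + 1/2 * (∑ d, ∑ e, ∑ b, fκ lam d e b * (ηm a a * ηm b b) * (F y d e * F y a b))) x - Dcov (fκ lam) γ ρ A a (fun y => ∑ d, ∑ e, ∑ b, fκ lam a e b * (ηm d d * ηm b b) * (F y d e * F y d b)) x :=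
      Dcov_sub (fκ lam) γ ρ A (((c1.add (contDiff_const.mul c2)).differentiable (by simp)) x)
        ((c3.differentiable (by simp)) x) a
    have h3 : Dcov (fκ lam) γ ρ A a (fun y => (∑ c, ηm c c * ηm a a * Dcov (fκ lam) γ ρ A c (fun z => F z c a) y) + 1/2 * (∑ d, ∑ e, ∑ b, fκ lam d e b * (ηm a a * ηm b b) * (F y d e * F y a b))) x
        = Dcov (fκ lam) γ ρ A a (fun y => ∑ c, ηm c c * ηm a a * Dcov (fκ lam) γ ρ A c (fun z => F z c a) y) x + Dcov (fκ lam) γ ρ A a (fun y => 1/2 * (∑ d, ∑ e, ∑ b, fκ lam d e b * (ηm a a * ηm b b) * (F y d e * F y a b))) x :=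
      Dcov_add (fκ lam) γ ρ A ((c1.differentiable (by simp)) x)
        (((contDiff_const.mul c2).differentiable (by simp)) x) a
    have h4 : Dcov (fκ lam) γ ρ A a (fun y => 1/2 * (∑ d, ∑ e, ∑ b, fκ lam d e b * (ηm a a * ηm b b) * (F y d e * F y a b))) x = 1/2 * Dcov (fκ lam) γ ρ A a (fun y => ∑ d, ∑ e, ∑ b, fκ lam d e b * (ηm a a * ηm b b) * (F y d e * F y a b)) x :=
      Dcov_const_mul (fκ lam) γ ρ A ((c2.differentiable (by simp)) x) (1/2) a
    have h5 : Dcov (fκ lam) γ ρ A a (fun y => α * ((∑ b, ∑ e, ∑ d, fκ lam b a b * (ηm e e * ηm d d) * (F y e d * F y e d)) + 4 * (∑ b, ∑ e, ∑ d, fκ lam b e b * (ηm d d * ηm a a) * (F y e d * F y d a)))) x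
        = α * Dcov (fκ lam) γ ρ A a (fun y => (∑ b, ∑ e, ∑ d, fκ lam b a b * (ηm e e * ηm d d) * (F y e d * F y e d)) + 4 * (∑ b, ∑ e, ∑ d, fκ lam b e b * (ηm d d * ηm a a) * (F y e d * F y d a))) x :=
      Dcov_const_mul (fκ lam) γ ρ A
        (((c4.add (contDiff_const.mul c5)).differentiable (by simp)) x) α a
    have h6 : Dcov (fκ lam) γ ρ A a (fun y => (∑ b, ∑ e, ∑ d, fκ lam b a b * (ηm e e * ηm d d) * (F y e d * F y e d)) + 4 * (∑ b, ∑ e, ∑ d, fκ lam b e b * (ηm d d * ηm a a) * (F y e d * F y d a))) x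
        = Dcov (fκ lam) γ ρ A a (fun y => ∑ b, ∑ e, ∑ d, fκ lam b a b * (ηm e e * ηm d d) * (F y e d * F y e d)) x + Dcov (fκ lam) γ ρ A a (fun y => 4 * (∑ b, ∑ e, ∑ d, fκ lam b e b * (ηm d d * ηm a a) * (F y e d * F y d a))) x :=
      Dcov_add (fκ lam) γ ρ A ((c4.differentiable (by simp)) x)
        (((contDiff_const.mul c5).differentiable (by simp)) x) a
    have h7 : Dcov (fκ lam) γ ρ A a (fun y => 4 * (∑ b, ∑ e, ∑ d, fκ lam b e b * (ηm d d * ηm a a) * (F y e d * F y d a))) x = 4 * Dcov (fκ lam) γ ρ A a (fun y => ∑ b, ∑ e, ∑ d, fκ lam b e b * (ηm d d * ηm a a) * (F y e d * F y d a)) x :=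
      Dcov_const_mul (fκ lam) γ ρ A ((c5.differentiable (by simp)) x) (4) a
    have h8 : Dcov (fκ lam) γ ρ A a (fun y => ∑ c, ηm c c * ηm a a * Dcov (fκ lam) γ ρ A c (fun z => F z c a) y) x = ∑ c, ηm c c * ηm a a * Dcov (fκ lam) γ ρ A a (fun y => Dcov (fκ lam) γ ρ A c (fun z => F z c a) y) x := by
      rw [Dcov_sum (fκ lam) γ ρ A Finset.univ
        (fun c => fun y => ηm c c * ηm a a * Dcov (fκ lam) γ ρ A c (fun z => F z c a) y)
        (fun c _ => (((contDiff_const.mul (hDsm c c a))).differentiable (by simp)) x) a]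
      exact Finset.sum_congr rfl fun c _ =>
        Dcov_const_mul (fκ lam) γ ρ A (((hDsm c c a).differentiable (by simp)) x) (ηm c c * ηm a a) a
    have h9 : Dcov (fκ lam) γ ρ A a (fun y => ∑ d, ∑ e, ∑ b, fκ lam d e b * (ηm a a * ηm b b) * (F y d e * F y a b)) x = ∑ d, ∑ e, ∑ b, fκ lam d e b * (ηm a a * ηm b b) * (Dcov (fκ lam) γ ρ A a (fun y => F y d e) x * F x a b + F x d e * Dcov (fκ lam) γ ρ A a (fun y => F y a b) x) := by
      rw [Dcov_sum (fκ lam) γ ρ A Finset.univ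
        (fun d => fun y => ∑ e, ∑ b, fκ lam d e b * (ηm a a * ηm b b) * (F y d e * F y a b))
        (fun d _ => ((ContDiff.sum fun e _ => ContDiff.sum fun b _ =>
          contDiff_const.mul ((hFsm d e).mul (hFsm a b)) : ContDiff ℝ (⊤ : ℕ∞) _).differentiable (by simp)) x) a]
      refine Finset.sum_congr rfl fun d _ => ?_
      rw [Dcov_sum (fκ lam) γ ρ A Finset.univ
        (fun e => fun y => ∑ b, fκ lam d e b * (ηm a a * ηm b b) * (F y d e * F y a b))
        (fun e _ => ((ContDiff.sum fun b _ =>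
          contDiff_const.mul ((hFsm d e).mul (hFsm a b)) : ContDiff ℝ (⊤ : ℕ∞) _).differentiable (by simp)) x) a]
      refine Finset.sum_congr rfl fun e _ => ?_
      rw [Dcov_sum (fκ lam) γ ρ A Finset.univ
        (fun b => fun y => fκ lam d e b * (ηm a a * ηm b b) * (F y d e * F y a b))
        (fun b _ => (((contDiff_const.mul ((hFsm d e).mul (hFsm a b))) : ContDiff ℝ (⊤ : ℕ∞) _).differentiable (by simp)) x) a]
      refine Finset.sum_congr rfl fun b _ => ?_
      rw [Dcov_const_mul (fκ lam) γ ρ A (((hFd d e).fun_mul (hFd a b)) x) (fκ lam d e b * (ηm a a * ηm b b)) a,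
        Dcov_mul (fκ lam) γ ρ A ((hFd d e) x) ((hFd a b) x) a]
    have h10 : Dcov (fκ lam) γ ρ A a (fun y => ∑ d, ∑ e, ∑ b, fκ lam a e b * (ηm d d * ηm b b) * (F y d e * F y d b)) x = ∑ d, ∑ e, ∑ b, fκ lam a e b * (ηm d d * ηm b b) * (Dcov (fκ lam) γ ρ A a (fun y => F y d e) x * F x d b + F x d e * Dcov (fκ lam) γ ρ A a (fun y => F y d b) x) := by
      rw [Dcov_sum (fκ lam) γ ρ A Finset.univ
        (fun d => fun y => ∑ e, ∑ b, fκ lam a e b * (ηm d d * ηm b b) * (F y d e * F y d b))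
        (fun d _ => ((ContDiff.sum fun e _ => ContDiff.sum fun b _ =>
          contDiff_const.mul ((hFsm d e).mul (hFsm d b)) : ContDiff ℝ (⊤ : ℕ∞) _).differentiable (by simp)) x) a]
      refine Finset.sum_congr rfl fun d _ => ?_
      rw [Dcov_sum (fκ lam) γ ρ A Finset.univ
        (fun e => fun y => ∑ b, fκ lam a e b * (ηm d d * ηm b b) * (F y d e * F y d b))
        (fun e _ => ((ContDiff.sum fun b _ =>
          contDiff_const.mul ((hFsm d e).mul (hFsm d b)) : ContDiff ℝ (⊤ : ℕ∞) _).differentiable (by simp)) x) a]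
      refine Finset.sum_congr rfl fun e _ => ?_
      rw [Dcov_sum (fκ lam) γ ρ A Finset.univ
        (fun b => fun y => fκ lam a e b * (ηm d d * ηm b b) * (F y d e * F y d b))
        (fun b _ => (((contDiff_const.mul ((hFsm d e).mul (hFsm d b))) : ContDiff ℝ (⊤ : ℕ∞) _).differentiable (by simp)) x) a]
      refine Finset.sum_congr rfl fun b _ => ?_
      rw [Dcov_const_mul (fκ lam) γ ρ A (((hFd d e).fun_mul (hFd d b)) x) (fκ lam a e b * (ηm d d * ηm b b)) a,
        Dcov_mul (fκ lam) γ ρ A ((hFd d e) x) ((hFd d b) x) a]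
    have h11 : Dcov (fκ lam) γ ρ A a (fun y => ∑ b, ∑ e, ∑ d, fκ lam b a b * (ηm e e * ηm d d) * (F y e d * F y e d)) x = ∑ b, ∑ e, ∑ d, fκ lam b a b * (ηm e e * ηm d d) * (Dcov (fκ lam) γ ρ A a (fun y => F y e d) x * F x e d + F x e d * Dcov (fκ lam) γ ρ A a (fun y => F y e d) x) := by
      rw [Dcov_sum (fκ lam) γ ρ A Finset.univ
        (fun b => fun y => ∑ e, ∑ d, fκ lam b a b * (ηm e e * ηm d d) * (F y e d * F y e d))
        (fun b _ => ((ContDiff.sum fun e _ => ContDiff.sum fun d _ =>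
          contDiff_const.mul ((hFsm e d).mul (hFsm e d)) : ContDiff ℝ (⊤ : ℕ∞) _).differentiable (by simp)) x) a]
      refine Finset.sum_congr rfl fun b _ => ?_
      rw [Dcov_sum (fκ lam) γ ρ A Finset.univ
        (fun e => fun y => ∑ d, fκ lam b a b * (ηm e e * ηm d d) * (F y e d * F y e d))
        (fun e _ => ((ContDiff.sum fun d _ =>
          contDiff_const.mul ((hFsm e d).mul (hFsm e d)) : ContDiff ℝ (⊤ : ℕ∞) _).differentiable (by simp)) x) a]
      refine Finset.sum_congr rfl fun e _ => ?_
      rw [Dcov_sum (fκ lam) γ ρ A Finset.univ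
        (fun d => fun y => fκ lam b a b * (ηm e e * ηm d d) * (F y e d * F y e d))
        (fun d _ => (((contDiff_const.mul ((hFsm e d).mul (hFsm e d))) : ContDiff ℝ (⊤ : ℕ∞) _).differentiable (by simp)) x) a]
      refine Finset.sum_congr rfl fun d _ => ?_
      rw [Dcov_const_mul (fκ lam) γ ρ A (((hFd e d).fun_mul (hFd e d)) x) (fκ lam b a b * (ηm e e * ηm d d)) a,
        Dcov_mul (fκ lam) γ ρ A ((hFd e d) x) ((hFd e d) x) a]
    have h12 : Dcov (fκ lam) γ ρ A a (fun y => ∑ b, ∑ e, ∑ d, fκ lam b e b * (ηm d d * ηm a a) * (F y e d * F y d a)) x = ∑ b, ∑ e, ∑ d, fκ lam b e b * (ηm d d * ηm a a) * (Dcov (fκ lam) γ ρ A a (fun y => F y e d) x * F x d a + F x e d * Dcov (fκ lam) γ ρ A a (fun y => F y d a) x) := by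
      rw [Dcov_sum (fκ lam) γ ρ A Finset.univ
        (fun b => fun y => ∑ e, ∑ d, fκ lam b e b * (ηm d d * ηm a a) * (F y e d * F y d a))
        (fun b _ => ((ContDiff.sum fun e _ => ContDiff.sum fun d _ =>
          contDiff_const.mul ((hFsm e d).mul (hFsm d a)) : ContDiff ℝ (⊤ : ℕ∞) _).differentiable (by simp)) x) a]
      refine Finset.sum_congr rfl fun b _ => ?_
      rw [Dcov_sum (fκ lam) γ ρ A Finset.univ
        (fun e => fun y => ∑ d, fκ lam b e b * (ηm d d * ηm a a) * (F y e d * F y d a))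
        (fun e _ => ((ContDiff.sum fun d _ =>
          contDiff_const.mul ((hFsm e d).mul (hFsm d a)) : ContDiff ℝ (⊤ : ℕ∞) _).differentiable (by simp)) x) a]
      refine Finset.sum_congr rfl fun e _ => ?_
      rw [Dcov_sum (fκ lam) γ ρ A Finset.univ
        (fun d => fun y => fκ lam b e b * (ηm d d * ηm a a) * (F y e d * F y d a))
        (fun d _ => (((contDiff_const.mul ((hFsm e d).mul (hFsm d a))) : ContDiff ℝ (⊤ : ℕ∞) _).differentiable (by simp)) x) a]
      refine Finset.sum_congr rfl fun d _ => ?_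
      rw [Dcov_const_mul (fκ lam) γ ρ A (((hFd e d).fun_mul (hFd d a)) x) (fκ lam b e b * (ηm d d * ηm a a)) a,
        Dcov_mul (fκ lam) γ ρ A ((hFd e d) x) ((hFd d a) x) a]
    rw [e1, h1, h2, h3, h4, h5, h6, h7, h8, h9, h10, h11, h12]
    ring
  -- flip lemmas for double covariant derivatives
  have hfun1 : ∀ a c : Fin 4, (fun y => Dcov (fκ lam) γ ρ A c (fun z => F z c a) y)
      = (fun y => -Dcov (fκ lam) γ ρ A c (fun z => F z a c) y) := by
    intro a c; funext y
    rw [show (fun z => F z c a) = (fun z => -F z a c) from funext fun z => hFas z c a]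
    exact Dcov_neg (fκ lam) γ ρ A c (fun z => F z a c) y
  have hDDswap : ∀ a c : Fin 4, Dcov (fκ lam) γ ρ A a (fun y => Dcov (fκ lam) γ ρ A c (fun z => F z c a) y) x
      = -Dcov (fκ lam) γ ρ A a (fun y => Dcov (fκ lam) γ ρ A c (fun z => F z a c) y) x := by
    intro a c
    rw [hfun1 a c]
    exact Dcov_neg (fκ lam) γ ρ A a (fun y => Dcov (fκ lam) γ ρ A c (fun z => F z a c) y) x
  have hstep1 : (∑ a, Dcov (fκ lam) γ ρ A a (fun y => EG α (fκ lam) γ ρ A F a y) x)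
      = (∑ a, (∑ c, ηm c c * ηm a a * Dcov (fκ lam) γ ρ A a (fun y => Dcov (fκ lam) γ ρ A c (fun z => F z c a) y) x)) + ∑ a, (1/2 * (∑ d, ∑ e, ∑ b, fκ lam d e b * (ηm a a * ηm b b) * (Dcov (fκ lam) γ ρ A a (fun y => F y d e) x * F x a b + F x d e * Dcov (fκ lam) γ ρ A a (fun y => F y a b) x)) - (∑ d, ∑ e, ∑ b, fκ lam a e b * (ηm d d * ηm b b) * (Dcov (fκ lam) γ ρ A a (fun y => F y d e) x * F x d b + F x d e * Dcov (fκ lam) γ ρ A a (fun y => F y d b) x)) + α * ((∑ b, ∑ e, ∑ d, fκ lam b a b * (ηm e e * ηm d d) * (Dcov (fκ lam) γ ρ A a (fun y => F y e d) x * F x e d + F x e d * Dcov (fκ lam) γ ρ A a (fun y => F y e d) x)) + 4 * (∑ b, ∑ e, ∑ d, fκ lam b e b * (ηm d d * ηm a a) * (Dcov (fκ lam) γ ρ A a (fun y => F y e d) x * F x d a + F x e d * Dcov (fκ lam) γ ρ A a (fun y => F y d a) x)))) := by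
    rw [← Finset.sum_add_distrib]
    exact Finset.sum_congr rfl fun a _ => hsummand a
  have hS2 : (∑ a : Fin 4, ∑ c : Fin 4, ηm c c * ηm a a * Dcov (fκ lam) γ ρ A a (fun y => Dcov (fκ lam) γ ρ A c (fun z => F z c a) y) x)
      = -∑ a : Fin 4, ∑ c : Fin 4, ηm c c * ηm a a * Dcov (fκ lam) γ ρ A c (fun y => Dcov (fκ lam) γ ρ A a (fun z => F z c a) y) x :=
    calc (∑ a : Fin 4, ∑ c : Fin 4, ηm c c * ηm a a * Dcov (fκ lam) γ ρ A a (fun y => Dcov (fκ lam) γ ρ A c (fun z => F z c a) y) x)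
        = ∑ c : Fin 4, ∑ a : Fin 4, ηm c c * ηm a a * Dcov (fκ lam) γ ρ A a (fun y => Dcov (fκ lam) γ ρ A c (fun z => F z c a) y) x :=
          Finset.sum_comm
      _ = ∑ c : Fin 4, ∑ a : Fin 4, -(ηm a a * ηm c c * Dcov (fκ lam) γ ρ A a (fun y => Dcov (fκ lam) γ ρ A c (fun z => F z a c) y) x) :=
          Finset.sum_congr rfl fun c _ => Finset.sum_congr rfl fun a _ => by rw [hDDswap a c]; ring
      _ = -∑ c : Fin 4, ∑ a : Fin 4, ηm a a * ηm c c * Dcov (fκ lam) γ ρ A a (fun y => Dcov (fκ lam) γ ρ A c (fun z => F z a c) y) x := by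
          simp only [Finset.sum_neg_distrib]
  have hcomm2 : ∀ a c : Fin 4,
      Dcov (fκ lam) γ ρ A a (fun y => Dcov (fκ lam) γ ρ A c (fun z => F z c a) y) x - Dcov (fκ lam) γ ρ A c (fun y => Dcov (fκ lam) γ ρ A a (fun z => F z c a) y) x
        = (∑ d, ∑ e, F x a d * fκ lam d e c * Dcov (fκ lam) γ ρ A e (fun z => F z c a) x)
          - ∑ d, ∑ e, F x c d * fκ lam d e a * Dcov (fκ lam) γ ρ A e (fun z => F z c a) x := by
    intro a c
    have hc := hComm (fun z => F z c a) (hFsm c a) a c x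
    have hz : pb (fκ lam) (fun y => F y a c) (fun z => F z c a) x = 0 := by
      rw [show (fun z => F z c a) = (fun z => -F z a c) from funext fun z => hFas z c a]
      rw [pb_neg_right, pb_self, neg_zero]
    rw [hz, zero_add] at hc
    exact hc
  have hhalf : (∑ a : Fin 4, ∑ c : Fin 4, ηm c c * ηm a a * Dcov (fκ lam) γ ρ A a (fun y => Dcov (fκ lam) γ ρ A c (fun z => F z c a) y) x)
      = (1/2) * ∑ a : Fin 4, ∑ c : Fin 4, ηm c c * ηm a a *
          ((∑ d, ∑ e, F x a d * fκ lam d e c * Dcov (fκ lam) γ ρ A e (fun z => F z c a) x)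
            - ∑ d, ∑ e, F x c d * fκ lam d e a * Dcov (fκ lam) γ ρ A e (fun z => F z c a) x) := by
    have h0 : (∑ a : Fin 4, ∑ c : Fin 4, ηm c c * ηm a a * Dcov (fκ lam) γ ρ A a (fun y => Dcov (fκ lam) γ ρ A c (fun z => F z c a) y) x)
        = (1/2) * ((∑ a : Fin 4, ∑ c : Fin 4, ηm c c * ηm a a * Dcov (fκ lam) γ ρ A a (fun y => Dcov (fκ lam) γ ρ A c (fun z => F z c a) y) x)
          - ∑ a : Fin 4, ∑ c : Fin 4, ηm c c * ηm a a * Dcov (fκ lam) γ ρ A c (fun y => Dcov (fκ lam) γ ρ A a (fun z => F z c a) y) x) := by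
      rw [hS2]; ring
    rw [h0]
    have h1 : ((∑ a : Fin 4, ∑ c : Fin 4, ηm c c * ηm a a * Dcov (fκ lam) γ ρ A a (fun y => Dcov (fκ lam) γ ρ A c (fun z => F z c a) y) x)
          - ∑ a : Fin 4, ∑ c : Fin 4, ηm c c * ηm a a * Dcov (fκ lam) γ ρ A c (fun y => Dcov (fκ lam) γ ρ A a (fun z => F z c a) y) x)
        = ∑ a : Fin 4, ∑ c : Fin 4, ηm c c * ηm a a *
            (Dcov (fκ lam) γ ρ A a (fun y => Dcov (fκ lam) γ ρ A c (fun z => F z c a) y) x - Dcov (fκ lam) γ ρ A c (fun y => Dcov (fκ lam) γ ρ A a (fun z => F z c a) y) x) := by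
      rw [← Finset.sum_sub_distrib]
      refine Finset.sum_congr rfl fun a _ => ?_
      rw [← Finset.sum_sub_distrib]
      exact Finset.sum_congr rfl fun c _ => by ring
    rw [h1]
    congr 1
    refine Finset.sum_congr rfl fun a _ => Finset.sum_congr rfl fun c _ => ?_
    rw [hcomm2 a c]
  rw [hstep1, hhalf]
  have hB1 := hBianchi x 0 1 2
  have hB2 := hBianchi x 0 1 3
  have hB3 := hBianchi x 0 2 3
  have hg10 := fun e => hGswap e 1 0
  have hg20 := fun e => hGswap e 2 0
  have hg21 := fun e => hGswap e 2 1
  have hg30 := fun e => hGswap e 3 0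
  have hg31 := fun e => hGswap e 3 1
  have hg32 := fun e => hGswap e 3 2
  have hfx10 : F x 1 0 = -F x 0 1 := hFas x 1 0
  have hfx20 : F x 2 0 = -F x 0 2 := hFas x 2 0
  have hfx21 : F x 2 1 = -F x 1 2 := hFas x 2 1
  have hfx30 : F x 3 0 = -F x 0 3 := hFas x 3 0
  have hfx31 : F x 3 1 = -F x 1 3 := hFas x 3 1
  have hfx32 : F x 3 2 = -F x 2 3 := hFas x 3 2
  simp only [EG, EC]
  simp only [hInPt]
  simp only [Fup_eq]
  simp only [Fin.sum_univ_four] at hB1 hB2 hB3 ⊢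
  simp only [hGdiag, hg10, hg20, hg21, hg30, hg31, hg32] at hB1 hB2 hB3 ⊢
  simp only [hFdiag, hfx10, hfx20, hfx21, hfx30, hfx31, hfx32] at hB1 hB2 hB3 ⊢
  simp only [fκ, etam00, etam11, etam22, etam33, Fin.reduceEq, reduceIte] at hB1 hB2 hB3 ⊢
  linear_combination ((-2-12*α)*lam*(F x 1 2)) * hB1 + ((-2-12*α)*lam*(F x 1 3)) * hB2
    + ((-2-12*α)*lam*(F x 2 3)) * hB3
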